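/- Theorem 1 (domain generalization bound): Let S_1,...,S_T and T be joint distributions on X×Y with Y finite, L a loss bounded in [0,1], Φ a Markov kernel X→Z inducing latent class-conditional distributions. If (i) for all i,j and all y, d_TV(S_i(z|y), S_j(z|y)) ≤ κ, and (ii) for all y, min_t d_TV(T(x|y), S_t(x|y)) ≤ ε, then the balanced error rate satisfies BER_T(h,Φ) ≤ (1/T) Σ_t BER_{S_t}(h,Φ) + κ + α_TV(Φ)·ε for any classifier h : Z → Y. -/

import Mathlib

open MeasureTheory ProbabilityTheory

/-- Total variation distance between two measures. -/
noncomputable def tvDist {Z : Type*} [MeasurableSpace Z]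
    (P Q : Measure Z) : ℝ :=
  ⨆ A : {A : Set Z // MeasurableSet A}, |(P A.1).toReal - (Q A.1).toReal|

/-- Dobrushin coefficient of a kernel. -/
noncomputable def dobrushin {X Z : Type*} [MeasurableSpace X] [MeasurableSpace Z]
    (Φ : Kernel X Z) : ℝ :=
  ⨆ p : X × X, tvDist (Φ p.1) (Φ p.2)

/-- Balanced error rate of classifier `h` for an environment given by its
class-conditional feature distributions `D y`, with latent conditionals given by
pushforward through the kernel `Φ`. -/
noncomputable def BER {X Z Y : Type*} [MeasurableSpace X] [MeasurableSpace Z] [Fintype Y]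
    (D : Y → Measure X) (Φ : Kernel X Z) (h : Z → Y) (L : Y → Y → ℝ) : ℝ :=
  (1 / (Fintype.card Y) : ℝ) * ∑ y : Y, ∫ z, L (h z) y ∂((D y).bind Φ)

/-!
A loss with values in `[0, 1]` has expectations under two probability measures that differ by at
most their total variation distance (layer cake formula). Pushing measures through `Φ` contracts
total variation by the Dobrushin coefficient `α`, because `x ↦ Φ x A` oscillates by at most `α`.
Hence for each class `y` the target risk is at most the risk on a source `S t` with
`d_TV(T(x|y), S_t(x|y)) ≤ ε` plus `α ε`, which in turn is at most the average source risk plus `κ`.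
Averaging over the classes gives the bound.
-/

section TotalVariation

variable {Z : Type*} [MeasurableSpace Z]

lemma tvDist_nonneg (P Q : Measure Z) : 0 ≤ tvDist P Q :=
  Real.iSup_nonneg fun _ => abs_nonneg _

lemma tvDist_comm (P Q : Measure Z) : tvDist P Q = tvDist Q P := by
  simp only [tvDist, abs_sub_comm]

variable (P Q : Measure Z) [IsProbabilityMeasure P] [IsProbabilityMeasure Q]

lemma abs_toReal_sub_toReal_le_one (A : Set Z) : |(P A).toReal - (Q A).toReal| ≤ 1 :=
  abs_sub_le_of_nonneg_of_le ENNReal.toReal_nonneg measureReal_le_one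
    ENNReal.toReal_nonneg measureReal_le_one

lemma tvDist_le_one : tvDist P Q ≤ 1 :=
  Real.iSup_le (fun A => abs_toReal_sub_toReal_le_one P Q A.1) zero_le_one

lemma abs_toReal_sub_toReal_le_tvDist {A : Set Z} (hA : MeasurableSet A) :
    |(P A).toReal - (Q A).toReal| ≤ tvDist P Q :=
  le_ciSup (f := fun A : {A : Set Z // MeasurableSet A} => |(P A.1).toReal - (Q A.1).toReal|)
    ⟨1, Set.forall_mem_range.2 fun A => abs_toReal_sub_toReal_le_one P Q A.1⟩ ⟨A, hA⟩

lemma integrable_of_forall_mem_Icc (μ : Measure Z) [IsFiniteMeasure μ] {f : Z → ℝ}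
    (hf : Measurable f) {a b : ℝ} (hab : ∀ z, f z ∈ Set.Icc a b) : Integrable f μ :=
  Integrable.of_bound hf.aestronglyMeasurable (max |a| |b|) <| ae_of_all _ fun z =>
    abs_le_max_abs_abs (hab z).1 (hab z).2

/- Layer cake: `∫ f = ∫₀^M μ {t ≤ f} dt`, and the integrands for `P` and `Q` differ by at most
`tvDist P Q` at every level `t`. -/
lemma integral_sub_integral_le_mul_tvDist_of_nonneg_of_le {f : Z → ℝ} (hf : Measurable f)
    {M : ℝ} (hf0 : ∀ z, 0 ≤ f z) (hfM : ∀ z, f z ≤ M) :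
    ∫ z, f z ∂P - ∫ z, f z ∂Q ≤ M * tvDist P Q := by
  have layer_cake (μ : Measure Z) [IsProbabilityMeasure μ] :
      ∫ z, f z ∂μ = ∫ t in Set.Ioc 0 M, (μ {z | t ≤ f z}).toReal :=
    (integrable_of_forall_mem_Icc μ hf fun z => ⟨hf0 z, hfM z⟩).integral_eq_integral_Ioc_meas_le
      (ae_of_all _ hf0) (ae_of_all _ hfM)
  have level_integrable (μ : Measure Z) [IsProbabilityMeasure μ] :
      IntegrableOn (fun t : ℝ => (μ {z | t ≤ f z}).toReal) (Set.Ioc 0 M) := by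
    have hanti : Antitone fun t : ℝ => μ {z | t ≤ f z} :=
      fun s t hst => measure_mono fun z hz => hst.trans hz
    exact integrable_of_forall_mem_Icc _ hanti.measurable.ennreal_toReal
      fun t => ⟨ENNReal.toReal_nonneg, measureReal_le_one⟩
  have level_le (t : ℝ) : (P {z | t ≤ f z}).toReal - (Q {z | t ≤ f z}).toReal ≤ tvDist P Q :=
    (le_abs_self _).trans
      (abs_toReal_sub_toReal_le_tvDist P Q (measurableSet_le measurable_const hf))
  have hM : 0 ≤ M := (hf0 (Measure.nonempty_of_neZero P).some).trans (hfM _)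
  calc ∫ z, f z ∂P - ∫ z, f z ∂Q
      = ∫ t in Set.Ioc 0 M, ((P {z | t ≤ f z}).toReal - (Q {z | t ≤ f z}).toReal) := by
        rw [layer_cake P, layer_cake Q, integral_sub (level_integrable P) (level_integrable Q)]
    _ ≤ ∫ _ in Set.Ioc 0 M, tvDist P Q :=
        integral_mono ((level_integrable P).sub (level_integrable Q)) (integrable_const _) level_le
    _ = M * tvDist P Q := by simp [Real.volume_real_Ioc_of_le hM]

lemma integral_sub_integral_le_mul_tvDist {f : Z → ℝ} (hf : Measurable f) {M : ℝ}
    (hosc : ∀ z z', f z - f z' ≤ M) :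
    ∫ z, f z ∂P - ∫ z, f z ∂Q ≤ M * tvDist P Q := by
  have : Nonempty Z := Measure.nonempty_of_neZero P
  have hbdd : BddBelow (Set.range f) :=
    ⟨f this.some - M, Set.forall_mem_range.2 fun z => by linarith [hosc this.some z]⟩
  set c := ⨅ z, f z
  have hc (z : Z) : f z - c ∈ Set.Icc 0 M :=
    ⟨sub_nonneg.2 (ciInf_le hbdd z),
      sub_le_comm.1 (le_ciInf fun z' => sub_le_comm.1 (hosc z z'))⟩
  have hint (μ : Measure Z) [IsProbabilityMeasure μ] : Integrable f μ :=
    integrable_of_forall_mem_Icc μ hf (a := c) (b := c + M) fun z =>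
      ⟨by linarith [(hc z).1], by linarith [(hc z).2]⟩
  have key := integral_sub_integral_le_mul_tvDist_of_nonneg_of_le P Q (hf.sub_const c)
    (fun z => (hc z).1) (fun z => (hc z).2)
  simpa [integral_sub (hint P) (integrable_const c), integral_sub (hint Q) (integrable_const c)]
    using key

lemma integral_le_integral_add_tvDist {f : Z → ℝ} (hf : Measurable f)
    (hf01 : ∀ z, f z ∈ Set.Icc (0 : ℝ) 1) :
    ∫ z, f z ∂P ≤ ∫ z, f z ∂Q + tvDist P Q := by
  have := integral_sub_integral_le_mul_tvDist P Q hf (M := 1) fun z z' => by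
    linarith [(hf01 z).2, (hf01 z').1]
  linarith

end TotalVariation

section Kernels

variable {X Z : Type*} [MeasurableSpace X] [MeasurableSpace Z]

lemma toReal_bind_apply (μ : Measure X) (Φ : Kernel X Z) [IsFiniteKernel Φ] {A : Set Z}
    (hA : MeasurableSet A) : ((μ.bind Φ) A).toReal = ∫ x, (Φ x A).toReal ∂μ := by
  rw [Measure.bind_apply hA Φ.aemeasurable,
    integral_toReal (Φ.measurable_coe hA).aemeasurable (ae_of_all _ fun _ => measure_lt_top _ _)]

lemma dobrushin_nonneg (Φ : Kernel X Z) : 0 ≤ dobrushin Φ :=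
  Real.iSup_nonneg fun _ => tvDist_nonneg _ _

lemma tvDist_le_dobrushin (Φ : Kernel X Z) [IsMarkovKernel Φ] (x x' : X) :
    tvDist (Φ x) (Φ x') ≤ dobrushin Φ :=
  le_ciSup (f := fun p : X × X => tvDist (Φ p.1) (Φ p.2))
    ⟨1, Set.forall_mem_range.2 fun _ => tvDist_le_one _ _⟩ (x, x')

/- `x ↦ Φ x A` oscillates by at most `dobrushin Φ`, which bounds the difference of its
integrals against `μ` and `ν`. -/
lemma tvDist_bind_le (μ ν : Measure X) [IsProbabilityMeasure μ] [IsProbabilityMeasure ν]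
    (Φ : Kernel X Z) [IsMarkovKernel Φ] :
    tvDist (μ.bind Φ) (ν.bind Φ) ≤ dobrushin Φ * tvDist μ ν := by
  refine Real.iSup_le (fun ⟨A, hA⟩ => ?_)
    (mul_nonneg (dobrushin_nonneg Φ) (tvDist_nonneg μ ν))
  have hosc (x x' : X) : (Φ x A).toReal - (Φ x' A).toReal ≤ dobrushin Φ :=
    (le_abs_self _).trans ((abs_toReal_sub_toReal_le_tvDist _ _ hA).trans
      (tvDist_le_dobrushin Φ x x'))
  have hmeas : Measurable fun x => (Φ x A).toReal := (Φ.measurable_coe hA).ennreal_toReal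
  rw [toReal_bind_apply μ Φ hA, toReal_bind_apply ν Φ hA, abs_le, neg_le_sub_iff_le_add]
  constructor
  · have := integral_sub_integral_le_mul_tvDist ν μ hmeas hosc
    rw [tvDist_comm] at this
    linarith
  · exact integral_sub_integral_le_mul_tvDist μ ν hmeas hosc

end Kernels

lemma le_mul_sum_add_of_forall_le_add {ι : Type*} [Fintype ι] [Nonempty ι] {a : ι → ℝ}
    {x κ : ℝ} (h : ∀ i, x ≤ a i + κ) : x ≤ (1 / Fintype.card ι : ℝ) * ∑ i, a i + κ := by
  have hcard : (0 : ℝ) < Fintype.card ι := by exact_mod_cast Fintype.card_pos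
  have hsum : (Fintype.card ι : ℝ) * (x - κ) ≤ ∑ i, a i := by
    simpa using Finset.card_nsmul_le_sum Finset.univ a (x - κ) fun i _ => by linarith [h i]
  have hmean : x - κ ≤ (∑ i, a i) / Fintype.card ι := (le_div_iff₀ hcard).2 (by linarith)
  rw [one_div_mul_eq_div]
  linarith

/-- Theorem 1: domain generalization bound. -/
theorem stmt5 {X Z Y : Type*} [MeasurableSpace X] [MeasurableSpace Z]
    [Fintype Y] [Nonempty Y]
    {T : ℕ} (hT : 0 < T)
    (S : Fin T → Y → Measure X) (Tst : Y → Measure X)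
    [∀ t y, IsProbabilityMeasure (S t y)] [∀ y, IsProbabilityMeasure (Tst y)]
    (Φ : Kernel X Z) [IsMarkovKernel Φ]
    (h : Z → Y) (L : Y → Y → ℝ)
    (hL01 : ∀ y y', L y y' ∈ Set.Icc (0:ℝ) 1)
    (hmeas : ∀ y : Y, Measurable fun z => L (h z) y)
    (κ ε : ℝ)
    (hκ : ∀ i j : Fin T, ∀ y : Y, tvDist ((S i y).bind Φ) ((S j y).bind Φ) ≤ κ)
    (hε : ∀ y : Y, ∃ t : Fin T, tvDist (Tst y) (S t y) ≤ ε) :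
    BER Tst Φ h L ≤
      (1 / T : ℝ) * ∑ t : Fin T, BER (S t) Φ h L + κ + dobrushin Φ * ε := by
  have : Nonempty (Fin T) := Fin.pos_iff_nonempty.1 hT
  have per_class (y : Y) : ∫ z, L (h z) y ∂((Tst y).bind Φ) ≤
      (1 / T : ℝ) * ∑ t, ∫ z, L (h z) y ∂((S t y).bind Φ) + (κ + dobrushin Φ * ε) := by
    obtain ⟨t, ht⟩ := hε y
    have risk_le (P Q : Measure Z) [IsProbabilityMeasure P] [IsProbabilityMeasure Q] :=
      integral_le_integral_add_tvDist P Q (hmeas y) fun z => hL01 (h z) y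
    have to_source : ∫ z, L (h z) y ∂((Tst y).bind Φ) ≤
        ∫ z, L (h z) y ∂((S t y).bind Φ) + dobrushin Φ * ε :=
      (risk_le _ _).trans <| add_le_add_right ((tvDist_bind_le _ _ Φ).trans <|
        mul_le_mul_of_nonneg_left ht (dobrushin_nonneg Φ)) _
    have to_average : ∫ z, L (h z) y ∂((S t y).bind Φ) ≤
        (1 / T : ℝ) * ∑ s, ∫ z, L (h z) y ∂((S s y).bind Φ) + κ := by
      simpa using le_mul_sum_add_of_forall_le_add fun s =>
        (risk_le _ _).trans (add_le_add_right (hκ t s y) _)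
    linarith
  calc BER Tst Φ h L
      ≤ (1 / Fintype.card Y : ℝ) *
          ∑ y, ((1 / T : ℝ) * ∑ t, ∫ z, L (h z) y ∂((S t y).bind Φ) + (κ + dobrushin Φ * ε)) := by
        unfold BER
        gcongr with y
        exact per_class y
    _ = (1 / T : ℝ) * ∑ t : Fin T, BER (S t) Φ h L + κ + dobrushin Φ * ε := by
        simp only [BER, mul_add, Finset.mul_sum, Finset.sum_add_distrib, Finset.sum_const,
          Finset.card_univ, nsmul_eq_mul]
        rw [Finset.sum_comm]
        field_simp
        ring
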